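/- Let F ∈ B_c and suppose F is continuously differentiable on some open interval I ⊆ ℝ. Let u(x,t) = ∫_ℝ F(x−ξ) Θ_t'(ξ) dξ for t > 0. Then for every x₀ ∈ I, u(x,t) → F'(x₀) as (x,t) → (x₀, 0) with t > 0; consequently the function equal to u on ℝ×(0,∞) and to F' on I×{0} is continuous on (ℝ×(0,∞)) ∪ (I×{0}). -/

import Mathlib

open MeasureTheory Filter Topology

/-- The Gauss–Weierstrass heat kernel `Θ_t(x) = (4πt)^(−1/2) exp(−x²/(4t))` for `t > 0`. -/
noncomputable def heatK (t x : ℝ) : ℝ :=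
  (Real.sqrt (4 * Real.pi * t))⁻¹ * Real.exp (-x ^ 2 / (4 * t))

/-- Spatial derivative of the heat kernel: `Θ_t'(ξ) = −ξ Θ_t(ξ)/(2t)`. -/
noncomputable def heatK' (t x : ℝ) : ℝ := -x * heatK t x / (2 * t)

/-- `F ∈ B_c`: continuous, vanishing at `−∞`, with a finite limit at `+∞`. -/
def memBc (F : ℝ → ℝ) : Prop :=
  Continuous F ∧ Tendsto F atBot (nhds (0 : ℝ)) ∧ ∃ L : ℝ, Tendsto F atTop (nhds L)

/-- Heat convolution `u(x,t) = ∫ F(x−ξ) Θ_t'(ξ) dξ` of the distribution `f = F'`. -/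
noncomputable def heatConv (F : ℝ → ℝ) (t x : ℝ) : ℝ := ∫ ξ : ℝ, F (x - ξ) * heatK' t ξ

/-!
Subtracting the first-order Taylor polynomial of `F` at `x` under the integral (possible because
`∫ Θ_t' = 0` and `∫ ξ Θ_t'(ξ) dξ = -1`) gives
`u(x,t) - F'(x₀) = ∫ (F(x-ξ) - F(x) + ξ F'(x₀)) Θ_t'(ξ) dξ`.
For `|ξ| < r` the mean value theorem bounds the bracket by `ε |ξ|`, and `∫ |ξ Θ_t'(ξ)| dξ = 1`.
For `|ξ| ≥ r` the bracket is `O(|ξ|)` since `F` is bounded, and the comparison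
`|ξ Θ_t'(ξ)| ≤ 2√2 e^{-r²/(8t)} |ξ Θ_{2t}'(ξ)|` makes this part vanish as `t → 0`.
Continuity for `t > 0` is dominated convergence.
-/

open Set Real

lemma abs_sub_sub_mul_le_of_hasDerivAt {F F' : ℝ → ℝ} {s : Set ℝ} (hs : Convex ℝ s)
    (hd : ∀ y ∈ s, HasDerivAt F (F' y) y) {D ε : ℝ} (hF' : ∀ y ∈ s, |F' y - D| ≤ ε)
    {x y : ℝ} (hx : x ∈ s) (hy : y ∈ s) : |F y - F x - (y - x) * D| ≤ ε * |y - x| := by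
  have := hs.norm_image_sub_le_of_norm_hasDerivWithin_le (f := fun z => F z - z * D)
    (fun z hz => ((hd z hz).sub ((hasDerivAt_id' z).mul_const D)).hasDerivWithinAt)
    (fun z hz => by simpa using hF' z hz) hx hy
  simp only [Real.norm_eq_abs] at this
  convert this using 2; ring

lemma Continuous.exists_abs_le_of_tendsto_atBot_atTop {F : ℝ → ℝ} (hFc : Continuous F) {a b : ℝ}
    (hbot : Tendsto F atBot (𝓝 a)) (htop : Tendsto F atTop (𝓝 b)) : ∃ C, ∀ x, |F x| ≤ C := by
  obtain ⟨p, hp⟩ := eventually_atBot.1 (hbot.eventually (Metric.closedBall_mem_nhds a one_pos))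
  obtain ⟨q, hq⟩ := eventually_atTop.1 (htop.eventually (Metric.closedBall_mem_nhds b one_pos))
  have hcover : range F ⊆ Metric.closedBall a 1 ∪ F '' Icc p q ∪ Metric.closedBall b 1 := by
    rintro _ ⟨x, rfl⟩
    rcases le_total x p with hxp | hpx
    · exact Or.inl (Or.inl (hp x hxp))
    rcases le_total q x with hqx | hxq
    · exact Or.inr (hq x hqx)
    · exact Or.inl (Or.inr (mem_image_of_mem F ⟨hpx, hxq⟩))
  have hbdd : Bornology.IsBounded (range F) :=
    ((Metric.isBounded_closedBall.union (isCompact_Icc.image hFc).isBounded).union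
      Metric.isBounded_closedBall).subset hcover
  obtain ⟨C, hC⟩ := isBounded_iff_forall_norm_le.1 hbdd
  exact ⟨C, fun x => hC _ (mem_range_self x)⟩

lemma tendsto_exp_neg_div_nhdsGT_zero {c : ℝ} (hc : 0 < c) :
    Tendsto (fun t => exp (-c / t)) (𝓝[>] 0) (𝓝 0) := by
  refine tendsto_exp_atBot.comp <|
    (tendsto_neg_atTop_atBot.comp (tendsto_inv_nhdsGT_zero.const_mul_atTop hc)).congr fun t => ?_
  simp only [Function.comp_apply]; ring

lemma heatK_pos {t : ℝ} (ht : 0 < t) (x : ℝ) : 0 < heatK t x := by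
  unfold heatK; positivity

lemma heatK_eq_mul_exp_neg_mul_sq (t x : ℝ) :
    heatK t x = (√(4 * π * t))⁻¹ * exp (-(4 * t)⁻¹ * x ^ 2) := by
  unfold heatK; ring_nf

lemma heatK'_eq_mul_exp_neg_mul_sq (t x : ℝ) :
    heatK' t x = -(2 * t)⁻¹ * (√(4 * π * t))⁻¹ * (x * exp (-(4 * t)⁻¹ * x ^ 2)) := by
  rw [heatK', heatK_eq_mul_exp_neg_mul_sq]; ring

lemma mul_heatK_eq_neg_mul_heatK' {t : ℝ} (ht : 0 < t) (x : ℝ) :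
    x * heatK t x = -(2 * t) * heatK' t x := by
  rw [heatK']; field_simp

lemma abs_mul_heatK'_eq {t : ℝ} (ht : 0 < t) (x : ℝ) :
    |x * heatK' t x| = x ^ 2 * heatK t x / (2 * t) := by
  have := heatK_pos ht x
  rw [heatK', show x * (-x * heatK t x / (2 * t)) = -(x ^ 2 * heatK t x / (2 * t)) by ring,
    abs_neg, abs_of_nonneg (by positivity)]

lemma hasDerivAt_heatK {t : ℝ} (ht : 0 < t) (x : ℝ) : HasDerivAt (heatK t) (heatK' t x) x := by
  refine (((hasDerivAt_pow 2 x).neg.div_const (4 * t)).exp.const_mul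
    (√(4 * π * t))⁻¹).congr_deriv ?_
  simp only [heatK', heatK, Pi.neg_apply]; field_simp; ring

lemma hasDerivAt_mul_heatK {t : ℝ} (ht : 0 < t) (x : ℝ) :
    HasDerivAt (fun x => x * heatK t x) (heatK t x + x * heatK' t x) x :=
  ((hasDerivAt_id' x).mul (hasDerivAt_heatK ht x)).congr_deriv (by ring)

lemma integrable_heatK {t : ℝ} (ht : 0 < t) : Integrable (heatK t) := by
  simp_rw [funext (heatK_eq_mul_exp_neg_mul_sq t)]
  exact (integrable_exp_neg_mul_sq (by positivity)).const_mul _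

lemma integrable_heatK' {t : ℝ} (ht : 0 < t) : Integrable (heatK' t) := by
  simp_rw [funext (heatK'_eq_mul_exp_neg_mul_sq t)]
  exact (integrable_mul_exp_neg_mul_sq (by positivity)).const_mul _

lemma integrable_mul_heatK {t : ℝ} (ht : 0 < t) : Integrable (fun x => x * heatK t x) := by
  simp_rw [mul_heatK_eq_neg_mul_heatK' ht]
  exact (integrable_heatK' ht).const_mul _

lemma integrable_mul_heatK' {t : ℝ} (ht : 0 < t) : Integrable (fun x => x * heatK' t x) := by
  have h := (integrable_rpow_mul_exp_neg_mul_sq (b := (4 * t)⁻¹) (by positivity)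
    (s := 2) (by norm_num)).const_mul (-(2 * t)⁻¹ * (√(4 * π * t))⁻¹)
  refine h.congr (Eventually.of_forall fun x => ?_)
  simp only [rpow_two, heatK'_eq_mul_exp_neg_mul_sq]; ring

lemma integral_heatK {t : ℝ} (ht : 0 < t) : ∫ x, heatK t x = 1 := by
  simp_rw [heatK_eq_mul_exp_neg_mul_sq]
  rw [integral_const_mul, integral_gaussian, div_inv_eq_mul,
    show π * (4 * t) = 4 * π * t by ring, inv_mul_cancel₀ (by positivity)]

lemma integral_heatK' {t : ℝ} (ht : 0 < t) : ∫ x, heatK' t x = 0 :=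
  integral_eq_zero_of_hasDerivAt_of_integrable (hasDerivAt_heatK ht) (integrable_heatK' ht)
    (integrable_heatK ht)

lemma integral_mul_heatK' {t : ℝ} (ht : 0 < t) : ∫ x, x * heatK' t x = -1 := by
  have h := integral_eq_zero_of_hasDerivAt_of_integrable (hasDerivAt_mul_heatK ht)
    ((integrable_heatK ht).add (integrable_mul_heatK' ht)) (integrable_mul_heatK ht)
  rw [integral_add (integrable_heatK ht) (integrable_mul_heatK' ht), integral_heatK ht] at h
  linarith

lemma integral_abs_mul_heatK' {t : ℝ} (ht : 0 < t) : ∫ x, |x * heatK' t x| = 1 := by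
  have hneg (x : ℝ) : |x * heatK' t x| = -(x * heatK' t x) := by
    rw [abs_mul_heatK'_eq ht, heatK']; ring
  simp_rw [hneg, integral_neg, integral_mul_heatK' ht, neg_neg]

lemma heatK_le_of_le_abs {t r x : ℝ} (ht : 0 < t) (hr : 0 ≤ r) (hx : r ≤ |x|) :
    heatK t x ≤ √2 * exp (-r ^ 2 / (8 * t)) * heatK (2 * t) x := by
  have hrx : r ^ 2 ≤ x ^ 2 := by simpa only [sq_abs] using pow_le_pow_left₀ hr hx 2
  have hexp : exp (-x ^ 2 / (4 * t)) ≤ exp (-r ^ 2 / (8 * t)) * exp (-x ^ 2 / (4 * (2 * t))) := by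
    rw [← exp_add, exp_le_exp, div_add_div _ _ (by positivity) (by positivity),
      div_le_div_iff₀ (by positivity) (by positivity)]
    nlinarith [mul_le_mul_of_nonneg_right hrx (by positivity : 0 ≤ 32 * t ^ 2)]
  have hsqrt : √(4 * π * (2 * t)) = √2 * √(4 * π * t) := by
    rw [← sqrt_mul zero_le_two]; ring_nf
  unfold heatK
  calc (√(4 * π * t))⁻¹ * exp (-x ^ 2 / (4 * t))
      ≤ (√(4 * π * t))⁻¹ * (exp (-r ^ 2 / (8 * t)) * exp (-x ^ 2 / (4 * (2 * t)))) := by gcongr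
    _ = _ := by rw [hsqrt]; field_simp

lemma abs_mul_heatK'_le_of_le_abs {t r x : ℝ} (ht : 0 < t) (hr : 0 ≤ r) (hx : r ≤ |x|) :
    |x * heatK' t x| ≤ 2 * √2 * exp (-r ^ 2 / (8 * t)) * |x * heatK' (2 * t) x| := by
  rw [abs_mul_heatK'_eq ht, abs_mul_heatK'_eq (by positivity)]
  calc x ^ 2 * heatK t x / (2 * t)
      ≤ x ^ 2 * (√2 * exp (-r ^ 2 / (8 * t)) * heatK (2 * t) x) / (2 * t) := by
        gcongr; exact heatK_le_of_le_abs ht hr hx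
    _ = _ := by field_simp

lemma abs_integral_mul_heatK'_le {g : ℝ → ℝ} {t r ε M : ℝ}
    (ht : 0 < t) (hr : 0 ≤ r) (hε : 0 ≤ ε) (hM : 0 ≤ M)
    (hnear : ∀ ξ, |ξ| < r → |g ξ| ≤ ε * |ξ|) (hfar : ∀ ξ, r ≤ |ξ| → |g ξ| ≤ M * |ξ|) :
    |∫ ξ, g ξ * heatK' t ξ| ≤ ε + M * (2 * √2 * exp (-r ^ 2 / (8 * t))) := by
  set K := 2 * √2 * exp (-r ^ 2 / (8 * t))
  have hbound (ξ : ℝ) :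
      |g ξ * heatK' t ξ| ≤ ε * |ξ * heatK' t ξ| + M * K * |ξ * heatK' (2 * t) ξ| := by
    rcases lt_or_ge |ξ| r with hξ | hξ
    · calc |g ξ * heatK' t ξ| = |g ξ| * |heatK' t ξ| := abs_mul _ _
        _ ≤ ε * |ξ| * |heatK' t ξ| := by gcongr; exact hnear ξ hξ
        _ = ε * |ξ * heatK' t ξ| := by rw [abs_mul]; ring
        _ ≤ _ := le_add_of_nonneg_right (by positivity)
    · calc |g ξ * heatK' t ξ| = |g ξ| * |heatK' t ξ| := abs_mul _ _
        _ ≤ M * |ξ| * |heatK' t ξ| := by gcongr; exact hfar ξ hξ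
        _ = M * |ξ * heatK' t ξ| := by rw [abs_mul]; ring
        _ ≤ M * (K * |ξ * heatK' (2 * t) ξ|) := by
          gcongr; exact abs_mul_heatK'_le_of_le_abs ht hr hξ
        _ ≤ _ := by rw [← mul_assoc]; exact le_add_of_nonneg_left (by positivity)
  have hint : Integrable fun ξ => ε * |ξ * heatK' t ξ| + M * K * |ξ * heatK' (2 * t) ξ| :=
    ((integrable_mul_heatK' ht).abs.const_mul ε).add
      ((integrable_mul_heatK' (by positivity)).abs.const_mul (M * K))
  calc |∫ ξ, g ξ * heatK' t ξ| ≤ ∫ ξ, |g ξ * heatK' t ξ| := abs_integral_le_integral_abs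
    _ ≤ ∫ ξ, (ε * |ξ * heatK' t ξ| + M * K * |ξ * heatK' (2 * t) ξ|) :=
      integral_mono_of_nonneg (Eventually.of_forall fun ξ => abs_nonneg _) hint
        (Eventually.of_forall hbound)
    _ = ε + M * K := by
      rw [integral_add ((integrable_mul_heatK' ht).abs.const_mul ε)
          ((integrable_mul_heatK' (by positivity)).abs.const_mul (M * K)),
        integral_const_mul, integral_const_mul, integral_abs_mul_heatK' ht,
        integral_abs_mul_heatK' (by positivity)]
      ring

lemma integrable_comp_sub_mul_heatK' {F : ℝ → ℝ} (hFc : Continuous F) {C : ℝ}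
    (hC : ∀ y, |F y| ≤ C) {t : ℝ} (ht : 0 < t) (x : ℝ) :
    Integrable fun ξ => F (x - ξ) * heatK' t ξ :=
  (integrable_heatK' ht).bdd_mul (hFc.comp (continuous_sub_left x)).aestronglyMeasurable
    (Eventually.of_forall fun ξ => hC (x - ξ))

lemma heatConv_sub_eq_integral {F : ℝ → ℝ} (hFc : Continuous F) {C : ℝ}
    (hC : ∀ y, |F y| ≤ C) {t : ℝ} (ht : 0 < t) (x D : ℝ) :
    heatConv F t x - D = ∫ ξ, (F (x - ξ) - F x + ξ * D) * heatK' t ξ := by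
  have hsplit : (fun ξ => (F (x - ξ) - F x + ξ * D) * heatK' t ξ) =
      fun ξ => F (x - ξ) * heatK' t ξ - F x * heatK' t ξ + D * (ξ * heatK' t ξ) := by
    funext ξ; ring
  have hF := integrable_comp_sub_mul_heatK' hFc hC ht x
  have h₀ := (integrable_heatK' ht).const_mul (F x)
  have h₁ := (integrable_mul_heatK' ht).const_mul D
  have hF₀ : Integrable fun ξ => F (x - ξ) * heatK' t ξ - F x * heatK' t ξ := hF.sub h₀
  rw [hsplit, integral_add hF₀ h₁, integral_sub hF h₀, integral_const_mul,
    integral_const_mul, integral_heatK' ht, integral_mul_heatK' ht, heatConv]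
  ring

lemma abs_heatConv_sub_le {F : ℝ → ℝ} (hFc : Continuous F) {C : ℝ} (hC : ∀ y, |F y| ≤ C)
    {t r ε D x : ℝ} (ht : 0 < t) (hr : 0 < r) (hε : 0 ≤ ε)
    (hnear : ∀ ξ, |ξ| < r → |F (x - ξ) - F x + ξ * D| ≤ ε * |ξ|) :
    |heatConv F t x - D| ≤ ε + (2 * C / r + |D|) * (2 * √2 * exp (-r ^ 2 / (8 * t))) := by
  have hC0 : 0 ≤ C := (abs_nonneg _).trans (hC 0)
  rw [heatConv_sub_eq_integral hFc hC ht x D]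
  refine abs_integral_mul_heatK'_le ht hr.le hε (by positivity) hnear fun ξ hξ => ?_
  have hCr : 2 * C ≤ 2 * C / r * |ξ| := by
    rw [div_mul_eq_mul_div, le_div_iff₀ hr]; exact mul_le_mul_of_nonneg_left hξ (by positivity)
  calc |F (x - ξ) - F x + ξ * D| ≤ |F (x - ξ)| + |F x| + |ξ| * |D| := by
        rw [← abs_mul]; exact (abs_add_le _ _).trans (add_le_add_left (abs_sub _ _) _)
    _ ≤ 2 * C + |ξ| * |D| := by linarith [hC (x - ξ), hC x]
    _ ≤ (2 * C / r + |D|) * |ξ| := by linarith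

lemma abs_heatK'_le_of_mem_Ioo {t₀ t : ℝ} (ht₀ : 0 < t₀) (ht : t ∈ Ioo (t₀ / 2) (2 * t₀))
    (ξ : ℝ) : |heatK' t ξ| ≤ (√(2 * π * t₀))⁻¹ * t₀⁻¹ * (|ξ| * exp (-(8 * t₀)⁻¹ * ξ ^ 2)) := by
  obtain ⟨h₁, h₂⟩ := ht
  have ht0 : 0 < t := by linarith
  have hsqrt : (√(4 * π * t))⁻¹ ≤ (√(2 * π * t₀))⁻¹ := by
    refine inv_anti₀ (by positivity) (sqrt_le_sqrt ?_); nlinarith [pi_pos]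
  have hexp : exp (-ξ ^ 2 / (4 * t)) ≤ exp (-(8 * t₀)⁻¹ * ξ ^ 2) := by
    rw [exp_le_exp, neg_div, neg_mul, neg_le_neg_iff, inv_mul_eq_div]
    exact div_le_div_of_nonneg_left (sq_nonneg ξ) (by positivity) (by linarith)
  rw [heatK', heatK, abs_div, abs_mul, abs_mul, abs_neg, abs_of_pos (by positivity : 0 < 2 * t),
    abs_of_pos (exp_pos _), abs_of_pos (by positivity : 0 < (√(4 * π * t))⁻¹)]
  calc |ξ| * ((√(4 * π * t))⁻¹ * exp (-ξ ^ 2 / (4 * t))) / (2 * t)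
      ≤ |ξ| * ((√(2 * π * t₀))⁻¹ * exp (-(8 * t₀)⁻¹ * ξ ^ 2)) / t₀ := by
        gcongr; linarith
    _ = _ := by field_simp

lemma continuousAt_heatConv {F : ℝ → ℝ} (hFc : Continuous F) {C : ℝ} (hC : ∀ y, |F y| ≤ C)
    {p₀ : ℝ × ℝ} (ht₀ : 0 < p₀.2) :
    ContinuousAt (fun p : ℝ × ℝ => heatConv F p.2 p.1) p₀ := by
  have hC0 : 0 ≤ C := (abs_nonneg _).trans (hC 0)
  set t₀ := p₀.2
  have hnhds : {p : ℝ × ℝ | p.2 ∈ Ioo (t₀ / 2) (2 * t₀)} ∈ 𝓝 p₀ :=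
    (isOpen_Ioo.preimage continuous_snd).mem_nhds ⟨by linarith, by linarith⟩
  refine continuousAt_of_dominated (bound := fun ξ => C * ((√(2 * π * t₀))⁻¹ * t₀⁻¹ *
      (|ξ| * exp (-(8 * t₀)⁻¹ * ξ ^ 2)))) ?_ ?_ ?_ ?_
  · exact Eventually.of_forall fun p => Continuous.aestronglyMeasurable
      (by unfold heatK' heatK; fun_prop)
  · filter_upwards [hnhds] with p hp
    refine Eventually.of_forall fun ξ => ?_
    rw [Real.norm_eq_abs, abs_mul]
    exact mul_le_mul (hC _) (abs_heatK'_le_of_mem_Ioo ht₀ hp ξ) (abs_nonneg _) hC0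
  · refine Integrable.const_mul (Integrable.const_mul ?_ _) _
    simpa only [norm_mul, Real.norm_eq_abs, abs_of_pos (exp_pos _)] using
      (integrable_mul_exp_neg_mul_sq (b := (8 * t₀)⁻¹) (by positivity)).norm
  · refine Eventually.of_forall fun ξ => ?_
    unfold heatK' heatK
    fun_prop (disch := positivity)

theorem tendsto_heatConv_of_hasDerivAt {F F' : ℝ → ℝ} (hFc : Continuous F) {C : ℝ}
    (hC : ∀ y, |F y| ≤ C) {x₀ : ℝ} (hd : ∀ᶠ y in 𝓝 x₀, HasDerivAt F (F' y) y)
    (hF' : ContinuousAt F' x₀) :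
    Tendsto (fun p : ℝ × ℝ => heatConv F p.2 p.1) (𝓝[{p | 0 < p.2}] (x₀, 0)) (𝓝 (F' x₀)) := by
  rw [Metric.tendsto_nhds]
  intro ε hε
  obtain ⟨ρ, hρ, hball⟩ := Metric.eventually_nhds_iff_ball.1
    (hd.and (hF'.eventually (Metric.closedBall_mem_nhds (F' x₀) (half_pos hε))))
  set r := ρ / 2 with hr_def
  have hr : 0 < r := half_pos hρ
  have hnear : ∀ x ∈ Metric.ball x₀ r, ∀ ξ, |ξ| < r →
      |F (x - ξ) - F x + ξ * F' x₀| ≤ ε / 2 * |ξ| := by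
    intro x hx ξ hξ
    rw [Metric.mem_ball, Real.dist_eq] at hx
    have hmem : ∀ y, |y - x| < r → y ∈ Metric.ball x₀ ρ := fun y hy => by
      rw [Metric.mem_ball, Real.dist_eq]
      linarith [abs_sub_le y x x₀]
    have := abs_sub_sub_mul_le_of_hasDerivAt (convex_ball x₀ ρ) (fun y hy => (hball y hy).1)
      (fun y hy => (hball y hy).2) (hmem x (by simpa using hr)) (hmem (x - ξ) (by simpa using hξ))
    simpa [sub_eq_add_neg] using this
  set K := (2 * C / r + |F' x₀|) * (2 * √2)
  have htail : ∀ᶠ t in 𝓝[>] 0, K * exp (-r ^ 2 / (8 * t)) < ε / 2 := by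
    have := (tendsto_exp_neg_div_nhdsGT_zero (c := r ^ 2 / 8) (by positivity)).const_mul K
    rw [mul_zero] at this
    exact (this.congr fun t => by ring_nf).eventually_lt_const (half_pos hε)
  have hsnd : Tendsto Prod.snd (𝓝[{p : ℝ × ℝ | 0 < p.2}] (x₀, 0)) (𝓝[>] 0) :=
    continuous_snd.continuousWithinAt.tendsto_nhdsWithin fun p hp => hp
  have hfst : Tendsto Prod.fst (𝓝[{p : ℝ × ℝ | 0 < p.2}] (x₀, 0)) (𝓝 x₀) :=
    continuous_fst.continuousWithinAt
  filter_upwards [hsnd.eventually htail, hfst.eventually (Metric.ball_mem_nhds x₀ hr),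
    self_mem_nhdsWithin] with p hpt hpx hp
  rw [Real.dist_eq]
  have := abs_heatConv_sub_le hFc hC hp hr (half_pos hε).le (hnear p.1 hpx)
  linarith

theorem stmt7_general (F : ℝ → ℝ) (hF : memBc F) (I : Set ℝ) (hIopen : IsOpen I)
    (hF1 : ∃ F' : ℝ → ℝ, (∀ x ∈ I, HasDerivAt F (F' x) x) ∧ ContinuousOn F' I) :
    (∀ x₀ ∈ I,
      Tendsto (fun p : ℝ × ℝ => heatConv F p.2 p.1)
        (nhdsWithin (x₀, 0) {p : ℝ × ℝ | 0 < p.2}) (nhds (deriv F x₀))) ∧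
    ContinuousOn (fun p : ℝ × ℝ => if 0 < p.2 then heatConv F p.2 p.1 else deriv F p.1)
      ({p : ℝ × ℝ | 0 < p.2} ∪ I ×ˢ {0}) := by
  obtain ⟨hFc, hbot, L, htop⟩ := hF
  obtain ⟨C, hC⟩ := hFc.exists_abs_le_of_tendsto_atBot_atTop hbot htop
  obtain ⟨F', hd, hF'c⟩ := hF1
  have hderiv : EqOn (deriv F) F' I := fun x hx => (hd x hx).deriv
  have hlim : ∀ x₀ ∈ I, Tendsto (fun p : ℝ × ℝ => heatConv F p.2 p.1)
      (𝓝[{p | 0 < p.2}] (x₀, 0)) (𝓝 (deriv F x₀)) := fun x₀ hx₀ => by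
    rw [hderiv hx₀]
    exact tendsto_heatConv_of_hasDerivAt hFc hC (eventually_of_mem (hIopen.mem_nhds hx₀) hd)
      (hF'c.continuousAt (hIopen.mem_nhds hx₀))
  refine ⟨hlim, ?_⟩
  rintro ⟨x, t⟩ (ht | ⟨hx, rfl : t = 0⟩)
  · refine ((continuousAt_heatConv hFc hC ht).congr ?_).continuousWithinAt
    filter_upwards [(isOpen_lt continuous_const continuous_snd).mem_nhds ht] with p hp
    exact (if_pos hp).symm
  · refine ContinuousWithinAt.union ?_ ?_
    · rw [ContinuousWithinAt, if_neg (lt_irrefl 0)]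
      exact (hlim x hx).congr' (eventually_nhdsWithin_of_forall fun p hp => (if_pos hp).symm)
    · refine ((hF'c x hx).comp continuousWithinAt_fst fun p hp => hp.1).congr
        (fun p hp => ?_) ?_
      · simp [mem_singleton_iff.1 hp.2, hderiv hp.1]
      · simp [hderiv hx]

/-- If `F ∈ B_c` is continuously differentiable on an open interval `I`, then for every
`x₀ ∈ I`, `u(x,t) → F'(x₀)` as `(x,t) → (x₀,0)` with `t > 0`; consequently the function
equal to `u` on `ℝ×(0,∞)` and to `F'` on `I×{0}` is continuous on their union. -/
theorem stmt7 (F : ℝ → ℝ) (hF : memBc F) (I : Set ℝ) (hIopen : IsOpen I)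
    (hIconn : I.OrdConnected)
    (hF1 : ∃ F' : ℝ → ℝ, (∀ x ∈ I, HasDerivAt F (F' x) x) ∧ ContinuousOn F' I) :
    (∀ x₀ ∈ I,
      Tendsto (fun p : ℝ × ℝ => heatConv F p.2 p.1)
        (nhdsWithin (x₀, 0) {p : ℝ × ℝ | 0 < p.2}) (nhds (deriv F x₀))) ∧
    ContinuousOn (fun p : ℝ × ℝ => if 0 < p.2 then heatConv F p.2 p.1 else deriv F p.1)
      ({p : ℝ × ℝ | 0 < p.2} ∪ I ×ˢ {0}) :=
  stmt7_general F hF I hIopen hF1
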